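/- Let (A_1, S_1), (A_2, S_2), … be independent, identically distributed random pairs, where A_i is real-valued with |A_1| ≤ M almost surely for some M > 0 and S_i takes values in {0, 1}. Fix a* ∈ ℝ and define the subjective reward R(θ, a, s) = −(a − a*)²·(θ·s + (1 − θ)·(1 − s)). Then the sample-variance objective converges uniformly over θ ∈ [0, 1] in probability to the population objective: sup_{θ ∈ [0,1]} | var_n(R(θ, A_1, S_1), …, R(θ, A_n, S_n)) − Var(R(θ, A_1, S_1)) | → 0 in probability as n → ∞. -/

import Mathlib

open Finset Filter MeasureTheory ProbabilityTheory

/-- The sample variance of `x 0, …, x (n-1)`. -/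
noncomputable def sampleVar (n : ℕ) (x : ℕ → ℝ) : ℝ :=
  (1 / (n : ℝ)) * ∑ i ∈ range n, (x i - (1 / (n : ℝ)) * ∑ j ∈ range n, x j) ^ 2

/-- The subjective reward `R(θ, a, s) = −(a − a*)²·(θ·s + (1 − θ)·(1 − s))`. -/
def subjReward (astar θ a s : ℝ) : ℝ :=
  -(a - astar) ^ 2 * (θ * s + (1 - θ) * (1 - s))

/-! Since `R(θ, a, s) = g(a, s) + θ·d(a, s)` with `g = (a - a*)²(s - 1)` and
`d = (a - a*)²(1 - 2s)`, both the sample and the population variance of the reward are quadratics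
in `θ` whose coefficients are the variances of `g`, `d` and their covariance. On `θ ∈ [0, 1]` the
difference of the two quadratics is bounded, uniformly in `θ`, by the sum of the three coefficient
errors, and these tend to `0` almost surely by the strong law of large numbers applied to `g`, `d`,
`g²`, `gd` and `d²`; almost sure convergence gives convergence in probability. -/

open Topology

noncomputable def sampleMean (n : ℕ) (x : ℕ → ℝ) : ℝ :=
  (1 / (n : ℝ)) * ∑ i ∈ range n, x i

noncomputable def sampleCov (n : ℕ) (x y : ℕ → ℝ) : ℝ :=
  (1 / (n : ℝ)) * ∑ i ∈ range n, (x i - sampleMean n x) * (y i - sampleMean n y)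

lemma sampleCov_self (n : ℕ) (x : ℕ → ℝ) : sampleCov n x x = sampleVar n x := by
  simp only [sampleCov, sampleVar, sampleMean, sq]

lemma sampleMean_add_mul (n : ℕ) (x y : ℕ → ℝ) (c : ℝ) :
    sampleMean n (fun i => x i + c * y i) = sampleMean n x + c * sampleMean n y := by
  simp only [sampleMean, sum_add_distrib, ← mul_sum]
  ring

lemma sampleCov_eq_sub (n : ℕ) (x y : ℕ → ℝ) :
    sampleCov n x y =
      sampleMean n (fun i => x i * y i) - sampleMean n x * sampleMean n y := by
  rcases Nat.eq_zero_or_pos n with rfl | hn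
  · simp [sampleCov, sampleMean]
  have hn' : (n : ℝ) ≠ 0 := by positivity
  simp only [sampleCov, sampleMean, sub_mul, mul_sub, sum_sub_distrib, ← sum_mul, ← mul_sum,
    sum_const, card_range, nsmul_eq_mul]
  field_simp
  ring

lemma sampleVar_add_mul (n : ℕ) (x y : ℕ → ℝ) (c : ℝ) :
    sampleVar n (fun i => x i + c * y i) =
      sampleVar n x + 2 * c * sampleCov n x y + c ^ 2 * sampleVar n y := by
  rw [← sampleCov_self, ← sampleCov_self, ← sampleCov_self, sampleCov, sampleMean_add_mul]
  simp only [sampleCov, mul_sum, ← sum_add_distrib]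
  congr 1
  ext i
  ring

lemma abs_add_mul_add_sq_mul_le {θ : ℝ} (hθ : |θ| ≤ 1) (a b c : ℝ) :
    |a + θ * b + θ ^ 2 * c| ≤ |a| + |b| + |c| := by
  have hθ2 : |θ ^ 2| ≤ 1 := by rw [abs_pow]; exact pow_le_one₀ (abs_nonneg θ) hθ
  calc |a + θ * b + θ ^ 2 * c| ≤ |a| + |θ| * |b| + |θ ^ 2| * |c| := by
        rw [← abs_mul, ← abs_mul]; exact abs_add_three _ _ _
    _ ≤ |a| + |b| + |c| := by gcongr <;> nlinarith [abs_nonneg b, abs_nonneg c]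

section

variable {Ω : Type*} [MeasurableSpace Ω] {P : Measure Ω}

lemma measurable_sampleCov {X Y : ℕ → Ω → ℝ} (hX : ∀ i, Measurable (X i))
    (hY : ∀ i, Measurable (Y i)) (n : ℕ) :
    Measurable fun ω => sampleCov n (X · ω) (Y · ω) := by
  simp only [sampleCov_eq_sub, sampleMean]
  fun_prop

lemma variance_add_mul [IsFiniteMeasure P] {X Y : Ω → ℝ} (hX : MemLp X 2 P) (hY : MemLp Y 2 P)
    (c : ℝ) :
    Var[fun ω => X ω + c * Y ω; P] = Var[X; P] + 2 * c * cov[X, Y; P] + c ^ 2 * Var[Y; P] := by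
  rw [variance_fun_add hX (hY.const_mul c), covariance_const_mul_right, variance_const_mul]
  ring

lemma memLp_sq_sub_mul_of_abs_le [IsFiniteMeasure P] {X C : Ω → ℝ}
    (hX : AEStronglyMeasurable X P) (hC : AEStronglyMeasurable C P) {M : ℝ}
    (hXM : ∀ᵐ ω ∂P, |X ω| ≤ M) (hC1 : ∀ᵐ ω ∂P, |C ω| ≤ 1) (a : ℝ) (p : ENNReal) :
    MemLp (fun ω => (X ω - a) ^ 2 * C ω) p P := by
  refine MemLp.of_bound (by fun_prop) ((M + |a|) ^ 2) ?_
  filter_upwards [hXM, hC1] with ω hXω hCω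
  have hsq : (X ω - a) ^ 2 ≤ (M + |a|) ^ 2 := by
    rw [← sq_abs]
    exact pow_le_pow_left₀ (abs_nonneg _) ((abs_sub _ _).trans (by gcongr)) 2
  rw [Real.norm_eq_abs, abs_mul, abs_sq]
  nlinarith [abs_nonneg (C ω), sq_nonneg (X ω - a)]

lemma tendsto_measure_lt_of_le_of_ae_tendsto [IsFiniteMeasure P] {F D : ℕ → Ω → ℝ}
    (hD : ∀ n, AEStronglyMeasurable (D n) P)
    (hDlim : ∀ᵐ ω ∂P, Tendsto (fun n => D n ω) atTop (𝓝 0)) (hFD : ∀ n ω, F n ω ≤ D n ω)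
    {ε : ℝ} (hε : 0 < ε) :
    Tendsto (fun n => P {ω | ε < F n ω}) atTop (𝓝 0) := by
  have hD_in_measure := tendstoInMeasure_iff_dist.1
    (tendstoInMeasure_of_tendsto_ae (g := fun _ => 0) hD hDlim) ε hε
  refine tendsto_of_tendsto_of_tendsto_of_le_of_le tendsto_const_nhds hD_in_measure
    (fun _ => zero_le) fun n => measure_mono fun ω hω => ?_
  simp only [Set.mem_ofPred_eq, Real.dist_eq, sub_zero] at hω ⊢
  exact (hω.trans_le (hFD n ω)).le.trans (le_abs_self _)

lemma ae_tendsto_sampleMean {X : ℕ → Ω → ℝ} (hint : Integrable (X 0) P)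
    (hindep : Pairwise fun i j => X i ⟂ᵢ[P] X j) (hident : ∀ i, IdentDistrib (X i) (X 0) P P) :
    ∀ᵐ ω ∂P, Tendsto (fun n => sampleMean n (X · ω)) atTop (𝓝 P[X 0]) := by
  filter_upwards [strong_law_ae X hint hindep hident] with ω hω
  simpa [sampleMean] using hω

variable [IsProbabilityMeasure P] {E : Type*} [MeasurableSpace E] {Z : ℕ → Ω → E} {φ ψ : E → ℝ}

lemma ae_tendsto_sampleCov (hindep : Pairwise fun i j => Z i ⟂ᵢ[P] Z j)
    (hident : ∀ i, IdentDistrib (Z i) (Z 0) P P) (hφ : Measurable φ) (hψ : Measurable ψ)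
    (hφ2 : MemLp (fun ω => φ (Z 0 ω)) 2 P) (hψ2 : MemLp (fun ω => ψ (Z 0 ω)) 2 P) :
    ∀ᵐ ω ∂P, Tendsto (fun n => sampleCov n (fun i => φ (Z i ω)) (fun i => ψ (Z i ω))) atTop
      (𝓝 cov[fun ω => φ (Z 0 ω), fun ω => ψ (Z 0 ω); P]) := by
  have hmean {f : E → ℝ} (hf : Measurable f) (hint : Integrable (fun ω => f (Z 0 ω)) P) :=
    ae_tendsto_sampleMean (X := fun i ω => f (Z i ω)) hint
      (fun i j hij => (hindep hij).comp hf hf) fun i => (hident i).comp hf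
  filter_upwards [hmean hφ (hφ2.integrable one_le_two), hmean hψ (hψ2.integrable one_le_two),
    hmean (hφ.mul hψ) (hφ2.integrable_mul hψ2)] with ω hφω hψω hφψω
  simp only [sampleCov_eq_sub, covariance_eq_sub hφ2 hψ2]
  exact hφψω.sub (hφω.mul hψω)

lemma ae_tendsto_sampleVar (hindep : Pairwise fun i j => Z i ⟂ᵢ[P] Z j)
    (hident : ∀ i, IdentDistrib (Z i) (Z 0) P P) (hφ : Measurable φ)
    (hφ2 : MemLp (fun ω => φ (Z 0 ω)) 2 P) :
    ∀ᵐ ω ∂P, Tendsto (fun n => sampleVar n (fun i => φ (Z i ω))) atTop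
      (𝓝 Var[fun ω => φ (Z 0 ω); P]) := by
  simpa only [sampleCov_self, covariance_self hφ2.aemeasurable]
    using ae_tendsto_sampleCov hindep hident hφ hφ hφ2 hφ2

theorem tendsto_measure_lt_iSup_abs_sampleVar_add_mul_sub_variance
    (hZ : ∀ i, Measurable (Z i)) (hindep : Pairwise fun i j => Z i ⟂ᵢ[P] Z j)
    (hident : ∀ i, IdentDistrib (Z i) (Z 0) P P) (hφ : Measurable φ) (hψ : Measurable ψ)
    (hφ2 : MemLp (fun ω => φ (Z 0 ω)) 2 P) (hψ2 : MemLp (fun ω => ψ (Z 0 ω)) 2 P)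
    {ε : ℝ} (hε : 0 < ε) :
    Tendsto (fun n => P {ω | ε < ⨆ θ : Set.Icc (0 : ℝ) 1,
      |sampleVar n (fun i => φ (Z i ω) + θ * ψ (Z i ω)) -
        Var[fun ω' => φ (Z 0 ω') + θ * ψ (Z 0 ω'); P]|}) atTop (𝓝 0) := by
  set D : ℕ → Ω → ℝ := fun n ω =>
    |sampleVar n (fun i => φ (Z i ω)) - Var[fun ω => φ (Z 0 ω); P]| +
      |2 * (sampleCov n (fun i => φ (Z i ω)) (fun i => ψ (Z i ω)) -
        cov[fun ω => φ (Z 0 ω), fun ω => ψ (Z 0 ω); P])| +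
      |sampleVar n (fun i => ψ (Z i ω)) - Var[fun ω => ψ (Z 0 ω); P]|
  have hD : ∀ n, Measurable (D n) := by
    intro n
    have hφZ i : Measurable fun ω => φ (Z i ω) := hφ.comp (hZ i)
    have hψZ i : Measurable fun ω => ψ (Z i ω) := hψ.comp (hZ i)
    have hφφ := measurable_sampleCov hφZ hφZ n
    have hφψ := measurable_sampleCov hφZ hψZ n
    have hψψ := measurable_sampleCov hψZ hψZ n
    simp only [D, ← sampleCov_self]
    fun_prop
  have hDlim : ∀ᵐ ω ∂P, Tendsto (fun n => D n ω) atTop (𝓝 0) := by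
    filter_upwards [ae_tendsto_sampleVar hindep hident hφ hφ2,
      ae_tendsto_sampleVar hindep hident hψ hψ2,
      ae_tendsto_sampleCov hindep hident hφ hψ hφ2 hψ2] with ω hφω hψω hφψω
    simpa [D] using ((tendsto_sub_nhds_zero_iff.2 hφω).abs.add
      ((tendsto_sub_nhds_zero_iff.2 hφψω).const_mul 2).abs).add
      (tendsto_sub_nhds_zero_iff.2 hψω).abs
  have : Nonempty (Set.Icc (0 : ℝ) 1) := ⟨⟨0, by norm_num⟩⟩
  refine tendsto_measure_lt_of_le_of_ae_tendsto (fun n => (hD n).aestronglyMeasurable) hDlim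
    (fun n ω => ciSup_le fun θ => ?_) hε
  have hθ : |(θ : ℝ)| ≤ 1 := abs_le.2 ⟨by linarith [θ.2.1], θ.2.2⟩
  refine le_of_eq_of_le ?_ (abs_add_mul_add_sq_mul_le hθ _ _ _)
  rw [sampleVar_add_mul, variance_add_mul hφ2 hψ2]
  congr 1
  ring

end

lemma subjReward_eq_add_mul (astar θ a s : ℝ) :
    subjReward astar θ a s = (a - astar) ^ 2 * (s - 1) + θ * ((a - astar) ^ 2 * (1 - 2 * s)) := by
  unfold subjReward
  ring

theorem sample_variance_objective_uniformly_consistent_general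
    {Ω : Type*} [MeasurableSpace Ω] (P : Measure Ω) [IsProbabilityMeasure P]
    (A S : ℕ → Ω → ℝ)
    (hIndep : iIndepFun
      (fun i => fun ω => (A i ω, S i ω)) P)
    (hIdent : ∀ i, IdentDistrib (fun ω => (A i ω, S i ω)) (fun ω => (A 0 ω, S 0 ω)) P P)
    (hmeas : ∀ i, Measurable (A i) ∧ Measurable (S i))
    (M : ℝ) (hA : ∀ᵐ ω ∂P, |A 0 ω| ≤ M)
    (hS : ∀ i, ∀ᵐ ω ∂P, S i ω = 0 ∨ S i ω = 1)
    (astar : ℝ) :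
    ∀ ε : ℝ, 0 < ε →
      Tendsto
        (fun n : ℕ =>
          P {ω | ε <
              ⨆ θ : Set.Icc (0 : ℝ) 1,
                |sampleVar n (fun i => subjReward astar θ (A i ω) (S i ω)) -
                  variance (fun ω' => subjReward astar θ (A 0 ω') (S 0 ω')) P|})
        atTop (nhds 0) := by
  intro ε hε
  have hZ i : Measurable fun ω => (A i ω, S i ω) := (hmeas i).1.prodMk (hmeas i).2
  have hmemLp {c : ℝ → ℝ} (hc : Measurable c) (hc1 : ∀ s, s = 0 ∨ s = 1 → |c s| ≤ 1) :
      MemLp (fun ω => (A 0 ω - astar) ^ 2 * c (S 0 ω)) 2 P :=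
    memLp_sq_sub_mul_of_abs_le (hmeas 0).1.aestronglyMeasurable
      (hc.comp (hmeas 0).2).aestronglyMeasurable hA ((hS 0).mono fun ω hω => hc1 _ hω) astar 2
  simp only [subjReward_eq_add_mul]
  exact tendsto_measure_lt_iSup_abs_sampleVar_add_mul_sub_variance
    (φ := fun p => (p.1 - astar) ^ 2 * (p.2 - 1)) (ψ := fun p => (p.1 - astar) ^ 2 * (1 - 2 * p.2))
    hZ (fun i j hij => hIndep.indepFun hij) hIdent (by fun_prop) (by fun_prop)
    (hmemLp (c := fun s => s - 1) (by fun_prop) (by rintro s (rfl | rfl) <;> norm_num))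
    (hmemLp (c := fun s => 1 - 2 * s) (by fun_prop) (by rintro s (rfl | rfl) <;> norm_num)) hε

/-- For i.i.d. bounded pairs `(A i, S i)` with `S i ∈ {0,1}`, the
sample-variance objective converges to the population objective uniformly over
`θ ∈ [0,1]`, in probability. -/
theorem sample_variance_objective_uniformly_consistent
    {Ω : Type*} [MeasurableSpace Ω] (P : Measure Ω) [IsProbabilityMeasure P]
    (A S : ℕ → Ω → ℝ)
    (hIndep : iIndepFun
      (fun i => fun ω => (A i ω, S i ω)) P)
    (hIdent : ∀ i, IdentDistrib (fun ω => (A i ω, S i ω)) (fun ω => (A 0 ω, S 0 ω)) P P)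
    (hmeas : ∀ i, Measurable (A i) ∧ Measurable (S i))
    (M : ℝ) (hM : 0 < M) (hA : ∀ᵐ ω ∂P, |A 0 ω| ≤ M)
    (hS : ∀ i, ∀ᵐ ω ∂P, S i ω = 0 ∨ S i ω = 1)
    (astar : ℝ) :
    ∀ ε : ℝ, 0 < ε →
      Tendsto
        (fun n : ℕ =>
          P {ω | ε <
              ⨆ θ : Set.Icc (0 : ℝ) 1,
                |sampleVar n (fun i => subjReward astar θ (A i ω) (S i ω)) -
                  variance (fun ω' => subjReward astar θ (A 0 ω') (S 0 ω')) P|})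
        atTop (nhds 0) :=
  sample_variance_objective_uniformly_consistent_general P A S hIndep hIdent hmeas M hA hS astar
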